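/- The even map D_2 on W^q given by D_2(L_n) = 0 and D_2(G_n) = G_n is an α⁰-derivation, and the four maps D_1, D_2, D_3, D_4 (D_1(L_n)=nL_n, D_1(G_n)=nG_n; D_2 as above; D_3(L_n)=nG_{n-1}, D_3(G_n)=0; D_4(L_n)=0, D_4(G_n)=L_{n+1}) are linearly independent over ℂ. -/

import Mathlib

noncomputable section

/-- The `q`-number `{m} = (1-q^m)/(1-q)`. -/
def qn (q : ℂ) (m : ℤ) : ℂ := (1 - q ^ m) / (1 - q)

/-- The `q`-deformed Witt superalgebra `W^q`, with even basis indexed by `Sum.inl n`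
(the `L_n`) and odd basis indexed by `Sum.inr n` (the `G_n`). -/
abbrev Wq : Type := (ℤ ⊕ ℤ) →₀ ℂ

def L (n : ℤ) : Wq := Finsupp.single (Sum.inl n) 1
def G (n : ℤ) : Wq := Finsupp.single (Sum.inr n) 1

/-- Bracket of `W^q` on basis elements:
`[L_n, L_m] = ({m}-{n}) L_{n+m}`, `[L_n, G_m] = ({m+1}-{n}) G_{n+m}`,
`[G_m, L_n] = -[L_n, G_m]`, `[G_n, G_m] = 0`. -/
def brBasis (q : ℂ) : ℤ ⊕ ℤ → ℤ ⊕ ℤ → Wq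
  | Sum.inl n, Sum.inl m => (qn q m - qn q n) • L (n + m)
  | Sum.inl n, Sum.inr m => (qn q (m + 1) - qn q n) • G (n + m)
  | Sum.inr m, Sum.inl n => -((qn q (m + 1) - qn q n) • G (n + m))
  | Sum.inr _, Sum.inr _ => 0

/-- The bilinear extension of the bracket to `W^q`. -/
def br (q : ℂ) (x y : Wq) : Wq :=
  x.sum fun a ca => y.sum fun b cb => (ca * cb) • brBasis q a b

/-- The twist map `α(L_n) = (1+q^n) L_n`, `α(G_n) = (1+q^{n+1}) G_n`. -/
def alphaW (q : ℂ) (x : Wq) : Wq :=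
  x.sum fun a ca =>
    match a with
    | Sum.inl n => (ca * (1 + q ^ n)) • L n
    | Sum.inr n => (ca * (1 + q ^ (n + 1))) • G n

/-- `par false x`: `x` is even (supported on the `L_n`);
`par true x`: `x` is odd (supported on the `G_n`). -/
def par (i : Bool) (x : Wq) : Prop :=
  if i then ∀ n, x (Sum.inl n) = 0 else ∀ n, x (Sum.inr n) = 0

/-- The sign `(-1)^{ij}` for parities `i, j`. -/
def sB (i j : Bool) : ℂ := if i && j then -1 else 1

end

noncomputable def D1 (x : Wq) : Wq :=
  x.sum fun a c =>
    match a with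
    | Sum.inl n => (c * (n : ℂ)) • L n
    | Sum.inr n => (c * (n : ℂ)) • G n

noncomputable def D2 (x : Wq) : Wq :=
  x.sum fun a c =>
    match a with
    | Sum.inl _ => 0
    | Sum.inr n => c • G n

noncomputable def D3 (x : Wq) : Wq :=
  x.sum fun a c =>
    match a with
    | Sum.inl n => (c * (n : ℂ)) • G (n - 1)
    | Sum.inr _ => 0

noncomputable def D4 (x : Wq) : Wq :=
  x.sum fun a c =>
    match a with
    | Sum.inl _ => 0
    | Sum.inr n => c • L (n + 1)

/-!
`D₂` multiplies each basis vector by its parity, `0` on `L_n` and `1` on `G_n`. The bracket of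
two basis vectors has the sum of their parities as parity (`[G_n, G_m] = 0` causes no harm), so by
bilinearity `D₂` is a derivation. A vanishing combination of `D₁, …, D₄` evaluated at `L_1` and
`G_0` gives two relations between `L_1` and `G_0` that kill all four coefficients.
-/

open Finsupp

def oddity : ℤ ⊕ ℤ → ℂ := Sum.elim (fun _ => 0) (fun _ => 1)

theorem D2_eq_linearCombination : D2 = linearCombination ℂ (Sum.elim (fun _ => 0) G) := by
  funext x
  rw [D2, linearCombination_apply]
  refine sum_congr fun a _ => ?_
  cases a <;> simp

theorem D2_add (x y : Wq) : D2 (x + y) = D2 x + D2 y := by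
  rw [D2_eq_linearCombination, map_add]

theorem D2_smul (t : ℂ) (x : Wq) : D2 (t • x) = t • D2 x := by
  rw [D2_eq_linearCombination, map_smul]

theorem D2_single (a : ℤ ⊕ ℤ) (c : ℂ) : D2 (single a c) = single a (oddity a * c) := by
  rw [D2_eq_linearCombination, linearCombination_single]
  cases a <;> simp [oddity, G]

theorem D2_L (n : ℤ) : D2 (L n) = 0 := by
  simp [L, D2_single, oddity]

theorem D2_G (n : ℤ) : D2 (G n) = G n := by
  simp [G, D2_single, oddity]

theorem D2_brBasis (q : ℂ) (a b : ℤ ⊕ ℤ) :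
    D2 (brBasis q a b) = (oddity a + oddity b) • brBasis q a b := by
  rcases a with n | n <;> rcases b with m | m <;>
    simp [brBasis, oddity, L, G, D2_eq_linearCombination]

theorem br_single_single (q : ℂ) (a b : ℤ ⊕ ℤ) (c d : ℂ) :
    br q (single a c) (single b d) = (c * d) • brBasis q a b := by
  simp [br, sum_single_index]

theorem br_zero_left (q : ℂ) (y : Wq) : br q 0 y = 0 := sum_zero_index

theorem br_zero_right (q : ℂ) (x : Wq) : br q x 0 = 0 := by
  simp [br]

theorem br_add_left (q : ℂ) (x x' y : Wq) : br q (x + x') y = br q x y + br q x' y := by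
  refine sum_add_index' (fun a => by simp) fun a c c' => ?_
  simp only [← sum_add, add_mul, add_smul]

theorem br_add_right (q : ℂ) (x y y' : Wq) : br q x (y + y') = br q x y + br q x y' := by
  rw [br, br, br, ← sum_add]
  refine sum_congr fun a _ => sum_add_index' (fun b => by simp) fun b d d' => ?_
  simp only [mul_add, add_smul]

theorem D2_br (q : ℂ) (x y : Wq) : D2 (br q x y) = br q (D2 x) y + br q x (D2 y) := by
  induction x using Finsupp.induction_linear generalizing y with
  | zero => simp [br_zero_left, D2_eq_linearCombination]
  | add x x' hx hx' =>
    rw [br_add_left, D2_add, hx, hx', D2_add, br_add_left, br_add_left]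
    abel
  | single a c =>
    induction y using Finsupp.induction_linear with
    | zero => simp [br_zero_right, D2_eq_linearCombination]
    | add y y' hy hy' =>
      rw [br_add_right, D2_add, hy, hy', D2_add, br_add_right, br_add_right]
      abel
    | single b d =>
      rw [br_single_single, D2_smul, D2_brBasis, D2_single, D2_single, br_single_single,
        br_single_single, smul_smul, ← add_smul]
      congr 1
      ring

theorem D1_L (n : ℤ) : D1 (L n) = (n : ℂ) • L n := by
  rw [D1, L, sum_single_index] <;> simp [L]

theorem D1_G (n : ℤ) : D1 (G n) = (n : ℂ) • G n := by
  rw [D1, G, sum_single_index] <;> simp [G]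

theorem D3_L (n : ℤ) : D3 (L n) = (n : ℂ) • G (n - 1) := by
  rw [D3, L, sum_single_index] <;> simp [G]

theorem D3_G (n : ℤ) : D3 (G n) = 0 := by
  rw [D3, G, sum_single_index]; simp

theorem D4_L (n : ℤ) : D4 (L n) = 0 := by
  rw [D4, L, sum_single_index]; simp

theorem D4_G (n : ℤ) : D4 (G n) = L (n + 1) := by
  rw [D4, G, sum_single_index] <;> simp [L]

theorem smul_L_add_smul_G_eq_zero {a b : ℂ} {n m : ℤ} (h : a • L n + b • G m = 0) :
    a = 0 ∧ b = 0 := by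
  constructor
  · simpa [L, G] using DFunLike.congr_fun h (Sum.inl n)
  · simpa [L, G] using DFunLike.congr_fun h (Sum.inr m)

theorem stmt11_general (q : ℂ) :
    (∀ x y : Wq, D2 (br q x y) = br q (D2 x) y + br q x (D2 y)) ∧
    LinearIndependent ℂ (![D1, D2, D3, D4] : Fin 4 → (Wq → Wq)) := by
  refine ⟨D2_br q, Fintype.linearIndependent_iff.mpr fun g hg => ?_⟩
  have at_L1 : g 0 • L 1 + g 2 • G 0 = 0 := by
    simpa [Fin.sum_univ_four, D1_L, D2_L, D3_L, D4_L] using congrFun hg (L 1)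
  have at_G0 : g 3 • L 1 + g 1 • G 0 = 0 := by
    simpa [Fin.sum_univ_four, D1_G, D2_G, D3_G, D4_G, add_comm] using congrFun hg (G 0)
  obtain ⟨h0, h2⟩ := smul_L_add_smul_G_eq_zero at_L1
  obtain ⟨h3, h1⟩ := smul_L_add_smul_G_eq_zero at_G0
  intro i
  fin_cases i <;> assumption

/-- `D_2` is an even `α⁰`-derivation of `W^q`, and `D_1, D_2, D_3, D_4` are
linearly independent over `ℂ`. -/
theorem stmt11 (q : ℂ) (hq0 : q ≠ 0) (hq1 : q ≠ 1)
    (hroot : ∀ k : ℤ, k ≠ 0 → q ^ k ≠ 1) :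
    (∀ x y : Wq, D2 (br q x y) = br q (D2 x) y + br q x (D2 y)) ∧
    LinearIndependent ℂ (![D1, D2, D3, D4] : Fin 4 → (Wq → Wq)) :=
  stmt11_general q
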